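/- Let λ ∈ Γ_k for some k ∈ {1,…,n}, and suppose λ_1 ≥ λ_2 ≥ ⋯ ≥ λ_n. Then λ_1 σ_{k−1}(λ|1) ≥ (k/n) σ_k(λ). -/

import Mathlib

open Finset Set

noncomputable section

/-- `sigmaV m lam`: the m-th elementary symmetric function σ_m(λ) (σ_0 = 1). -/
def sigmaV {n : ℕ} (m : ℕ) (lam : Fin n → ℝ) : ℝ :=
  ∑ s ∈ Finset.powersetCard m Finset.univ, ∏ i ∈ s, lam i

/-- σ_m(λ|i): σ_m of the vector λ with the i-th entry set to zero. -/
def sigmaVd {n : ℕ} (m : ℕ) (i : Fin n) (lam : Fin n → ℝ) : ℝ :=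
  sigmaV m (Function.update lam i 0)

/-- The Gårding cone Γ_k : σ_m(λ) > 0 for all 1 ≤ m ≤ k. -/
def GammaV {n : ℕ} (k : ℕ) (lam : Fin n → ℝ) : Prop :=
  ∀ m, 1 ≤ m → m ≤ k → 0 < sigmaV m lam

/-- σ_m of a matrix: the sum of its m×m principal minors (equivalently, the m-th
elementary symmetric function σ_m(λ(A)) of its eigenvalues). -/
def sigmaM {n : ℕ} (m : ℕ) (A : Fin n → Fin n → ℝ) : ℝ :=
  ∑ s ∈ Finset.powersetCard m Finset.univ,
    Matrix.det ((Matrix.of A).submatrix (fun i : ↥s => i.1) (fun i : ↥s => i.1))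

/-- λ(A) ∈ Γ_k, expressed via principal minors: σ_m(A) > 0 for all 1 ≤ m ≤ k. -/
def GammaM {n : ℕ} (k : ℕ) (A : Fin n → Fin n → ℝ) : Prop :=
  ∀ m, 1 ≤ m → m ≤ k → 0 < sigmaM m A

/-- Partial derivative ∂u/∂x_i. -/
def pd {n : ℕ} (i : Fin n) (u : (Fin n → ℝ) → ℝ) : (Fin n → ℝ) → ℝ :=
  fun x => fderiv ℝ u x (Pi.single i 1)

/-- The gradient Du. -/
def gradV {n : ℕ} (u : (Fin n → ℝ) → ℝ) (x : Fin n → ℝ) : Fin n → ℝ :=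
  fun i => pd i u x

/-- The Hessian D²u. -/
def hessM {n : ℕ} (u : (Fin n → ℝ) → ℝ) (x : Fin n → ℝ) : Fin n → Fin n → ℝ :=
  fun i j => pd j (pd i u) x

/-- Euclidean inner product. -/
def dotV {n : ℕ} (a b : Fin n → ℝ) : ℝ := ∑ i, a i * b i

/-- Euclidean norm. -/
def normV {n : ℕ} (a : Fin n → ℝ) : ℝ := Real.sqrt (dotV a a)

/-- Frobenius norm of a matrix (used for |D²u|). -/
def normM {n : ℕ} (A : Fin n → Fin n → ℝ) : ℝ := Real.sqrt (∑ i, ∑ j, (A i j)^2)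

/-- `ν` is the outer unit normal to the convex domain Ω at the boundary point x:
the unit vector with ⟨y − x, ν⟩ ≤ 0 for all y ∈ closure Ω. -/
def IsOuterNormalAt {n : ℕ} (Ω : Set (Fin n → ℝ)) (x ν : Fin n → ℝ) : Prop :=
  normV ν = 1 ∧ ∀ y ∈ closure Ω, dotV (y - x) ν ≤ 0

/-- Ω is a domain of boundary regularity Cᵐ: it is the sublevel set of a Cᵐ defining
function whose gradient does not vanish on the boundary. -/
def BoundaryRegular {n : ℕ} (Ω : Set (Fin n → ℝ)) (m : WithTop ℕ∞) : Prop :=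
  ∃ ρ : (Fin n → ℝ) → ℝ, ContDiff ℝ m ρ ∧ Ω = {x | ρ x < 0} ∧
    frontier Ω = {x | ρ x = 0} ∧ ∀ x ∈ frontier Ω, gradV ρ x ≠ 0

/-- Euclidean distance d(x) = dist(x, ∂Ω). -/
def distBd {n : ℕ} (Ω : Set (Fin n → ℝ)) (x : Fin n → ℝ) : ℝ :=
  sInf ((fun y => normV (x - y)) '' frontier Ω)

/-- The collar Ω_μ = {x ∈ Ω : dist(x, ∂Ω) < μ}. -/
def collar {n : ℕ} (Ω : Set (Fin n → ℝ)) (μ : ℝ) : Set (Fin n → ℝ) :=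
  {x ∈ Ω | distBd Ω x < μ}

/-- The quadratic form A(v,v) = Σ_{ij} A_{ij} v_i v_j. -/
def quadF {n : ℕ} (A : Fin n → Fin n → ℝ) (v : Fin n → ℝ) : ℝ :=
  ∑ i, ∑ j, A i j * v i * v j

/-- Time derivative u_t(x,t). -/
def ut {n : ℕ} (u : ℝ → (Fin n → ℝ) → ℝ) (x : Fin n → ℝ) (t : ℝ) : ℝ :=
  deriv (fun s => u s x) t

/-- ∂[σ_k(λ)/σ_l(λ)]/∂λ_i, via the explicit formula
(σ_{k−1}(λ|i)σ_l(λ) − σ_k(λ)σ_{l−1}(λ|i))/σ_l(λ)², with σ_{−1} := 0. -/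
def dQuotV {n : ℕ} (k l : ℕ) (i : Fin n) (lam : Fin n → ℝ) : ℝ :=
  (sigmaVd (k-1) i lam * sigmaV l lam
    - sigmaV k lam * (if l = 0 then 0 else sigmaVd (l-1) i lam)) / (sigmaV l lam)^2

/-- σ_m(A|i): σ_m of the matrix A with the i-th row and column deleted, i.e. the sum
of the m×m principal minors avoiding index i. -/
def sigmaMd {n : ℕ} (m : ℕ) (i : Fin n) (A : Fin n → Fin n → ℝ) : ℝ :=
  ∑ s ∈ (Finset.powersetCard m Finset.univ).filter (fun s => i ∉ s),
    Matrix.det ((Matrix.of A).submatrix (fun j : ↥s => j.1) (fun j : ↥s => j.1))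

/-- ∂[σ_k(A)/σ_l(A)]/∂a_{ii}, via ∂σ_m(A)/∂a_{ii} = σ_{m−1}(A|i) (σ_{−1} := 0):
(σ_{k−1}(A|i)σ_l(A) − σ_k(A)σ_{l−1}(A|i))/σ_l(A)². -/
def dQuotM {n : ℕ} (k l : ℕ) (i : Fin n) (A : Fin n → Fin n → ℝ) : ℝ :=
  (sigmaMd (k-1) i A * sigmaM l A
    - sigmaM k A * (if l = 0 then 0 else sigmaMd (l-1) i A)) / (sigmaM l A)^2

/-- F^{ij}: the derivative of B ↦ log(σ_k(B)/σ_l(B)) at A in the matrix direction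
E_{ij} (the derivative of log(σ_k/σ_l) with respect to the (i,j) entry). -/
def Fcoef {n : ℕ} (k l : ℕ) (i j : Fin n) (A : Fin n → Fin n → ℝ) : ℝ :=
  fderiv ℝ (fun B : Fin n → Fin n → ℝ => Real.log (sigmaM k B / sigmaM l B)) A
    (Pi.single i (Pi.single j 1))

end

/-! The key fact is that `λ ∈ Γ_{k+1}` implies `λ|i ∈ Γ_k`, i.e. `σ_k(λ|i) > 0`. It is proved by
induction on `k`, moving `λ` along `λ + s (1, …, 1)`, `s ≥ 0`, which stays in `Γ_{k+1}`:
`σ_k(λ + s | i)` is positive once all entries are positive, and it never vanishes, because at a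
zero `w = (λ + s)|i` the identity `∑ⱼ wⱼ² σ_{k-1}(w|j) = σ_1(w) σ_k(w) - (k+1) σ_{k+1}(w)` has a
negative right side, while the induction hypothesis, passed to the closure of `Γ_k`, makes every
`σ_{k-1}(w|j)` nonnegative.

Then, with `a = λ_1` maximal and `w = λ|1`, `σ_k(λ) = a σ_{k-1}(w) + σ_k(w)`. If `σ_k(w) ≤ 0` the
claim is immediate; otherwise `w ∈ Γ_k`, and summing the nonnegative terms
`(a - wⱼ) σ_{k-1}(w|j)`, of which the `j = 1` term alone is `a σ_{k-1}(w)`, gives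
`k σ_k(w) ≤ (n - k) a σ_{k-1}(w)`. -/

section ElementarySymmetric

variable {n : ℕ}

lemma sigmaV_zero (lam : Fin n → ℝ) : sigmaV 0 lam = 1 := by
  simp [sigmaV]

lemma sigmaV_one (lam : Fin n → ℝ) : sigmaV 1 lam = ∑ i, lam i := by
  simp [sigmaV, powersetCard_one]

lemma sigmaVd_eq_sum_filter (m : ℕ) (i : Fin n) (lam : Fin n → ℝ) :
    sigmaVd m i lam = ∑ s ∈ powersetCard m univ with i ∉ s, ∏ j ∈ s, lam j := by
  rw [sigmaVd, sigmaV, sum_filter]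
  refine sum_congr rfl fun s _ => ?_
  split_ifs with hi
  · rw [prod_update_of_mem hi, zero_mul]
  · exact prod_update_of_notMem hi _ _

lemma sigmaVd_eq_sum_erase (m : ℕ) (i : Fin n) (lam : Fin n → ℝ) :
    sigmaVd m i lam = ∑ s ∈ powersetCard m (univ.erase i), ∏ j ∈ s, lam j := by
  rw [sigmaVd_eq_sum_filter]
  congr 1
  ext s
  simp [mem_powersetCard, subset_erase, and_comm]

lemma sigmaV_succ (m : ℕ) (i : Fin n) (lam : Fin n → ℝ) :
    sigmaV (m + 1) lam = lam i * sigmaVd m i lam + sigmaVd (m + 1) i lam := by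
  have hi : i ∉ univ.erase i := notMem_erase i univ
  have hnot : ∀ s ∈ powersetCard m (univ.erase i), i ∉ s := fun s hs h =>
    hi ((mem_powersetCard.mp hs).1 h)
  rw [sigmaVd_eq_sum_erase, sigmaVd_eq_sum_erase, sigmaV, ← insert_erase (mem_univ i),
    powersetCard_succ_insert hi, erase_insert hi, sum_union, sum_image, mul_sum, add_comm]
  · exact congrArg (· + _) (sum_congr rfl fun s hs => prod_insert (hnot s hs))
  · intro s hs t ht hst
    rw [← erase_insert (hnot s hs), ← erase_insert (hnot t ht)]
    exact congrArg (·.erase i) hst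
  · refine disjoint_left.mpr fun s hs hs' => ?_
    obtain ⟨t, -, rfl⟩ := mem_image.mp hs'
    exact hi ((mem_powersetCard.mp hs).1 (mem_insert_self i t))

lemma sum_sigmaVd (m : ℕ) (lam : Fin n → ℝ) :
    ∑ i, sigmaVd m i lam = ((n : ℝ) - m) * sigmaV m lam := by
  simp_rw [sigmaVd_eq_sum_filter, sum_filter]
  rw [sum_comm, sigmaV, mul_sum]
  refine sum_congr rfl fun s hs => ?_
  have hcard : (#(univ.filter (· ∉ s)) : ℝ) = n - m := by
    rw [filter_not, filter_mem_eq_inter, Finset.univ_inter, card_univ_sdiff, Fintype.card_fin,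
      ← (mem_powersetCard.mp hs).2, Nat.cast_sub (by simpa using card_le_univ s)]
  rw [← sum_filter, sum_const, nsmul_eq_mul, hcard]

lemma sum_mul_sigmaVd (m : ℕ) (lam : Fin n → ℝ) :
    ∑ i, lam i * sigmaVd m i lam = (m + 1) * sigmaV (m + 1) lam := by
  simp_rw [fun i => eq_sub_of_add_eq (sigmaV_succ m i lam).symm]
  rw [sum_sub_distrib, sum_const, card_univ, Fintype.card_fin, nsmul_eq_mul, sum_sigmaVd]
  push_cast
  ring

lemma sum_sq_mul_sigmaVd (m : ℕ) (lam : Fin n → ℝ) :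
    ∑ i, lam i ^ 2 * sigmaVd m i lam
      = sigmaV 1 lam * sigmaV (m + 1) lam - (m + 2) * sigmaV (m + 2) lam := by
  have hterm : ∀ i, lam i ^ 2 * sigmaVd m i lam
      = lam i * sigmaV (m + 1) lam - lam i * sigmaVd (m + 1) i lam := by
    intro i
    rw [sigmaV_succ m i lam]
    ring
  rw [sum_congr rfl fun i _ => hterm i, sum_sub_distrib, ← sum_mul, ← sigmaV_one,
    sum_mul_sigmaVd]
  push_cast
  ring

lemma sigmaV_add_const {m : ℕ} (hmn : m ≤ n) (c : ℝ) (lam : Fin n → ℝ) :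
    sigmaV m (fun j => lam j + c)
      = ∑ l ∈ range (m + 1), ((n - l).choose (m - l) : ℝ) * c ^ (m - l) * sigmaV l lam := by
  have hexpand : ∀ A ∈ powersetCard m (univ : Finset (Fin n)),
      ∏ j ∈ A, (lam j + c) = ∑ T ∈ A.powerset, (∏ j ∈ T, lam j) * c ^ (m - #T) := by
    intro A hA
    rw [prod_add]
    refine sum_congr rfl fun T hT => ?_
    rw [prod_const, card_sdiff_of_subset (Finset.mem_powerset.mp hT), (mem_powersetCard.mp hA).2]
  have hcount : ∀ T : Finset (Fin n), #T ≤ m →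
      #((powersetCard m univ).filter (T ⊆ ·)) = (n - #T).choose (m - #T) := by
    intro T hT
    rw [card_filter_powersetCard_subset T univ m (subset_univ T) hT, card_univ, Fintype.card_fin]
  rw [sigmaV, sum_congr rfl hexpand,
    sum_comm' (t' := univ.powerset) (s' := fun T => (powersetCard m univ).filter (T ⊆ ·))
      (fun A T => by
        simp only [mem_powersetCard, Finset.mem_powerset, mem_filter]
        exact ⟨fun ⟨h, hTA⟩ => ⟨⟨h, hTA⟩, hTA.trans h.1⟩, fun ⟨h, _⟩ => h⟩),
    sum_powerset, card_univ, Fintype.card_fin]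
  rw [← sum_range_add_sum_Ico _ (by omega : m + 1 ≤ n + 1),
    sum_eq_zero (s := Ico (m + 1) (n + 1)), add_zero]
  · refine sum_congr rfl fun l hl => ?_
    rw [sigmaV, mul_sum]
    refine sum_congr rfl fun T hT => ?_
    have hTl : #T = l := (mem_powersetCard.mp hT).2
    rw [sum_const, hcount T (by rw [hTl]; simpa [Nat.lt_succ_iff] using hl), hTl, nsmul_eq_mul]
    ring
  · intro l hl
    refine sum_eq_zero fun T hT => sum_eq_zero fun A hA =>
      absurd ?_ (Nat.not_le.mpr (mem_Ico.mp hl).1)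
    rw [mem_filter, mem_powersetCard] at hA
    rw [← (mem_powersetCard.mp hT).2, ← hA.1.2]
    exact card_le_card hA.2

lemma term_le_sigmaV_add_const {m l : ℕ} (hmn : m ≤ n) (hlm : l ≤ m) {c : ℝ} (hc : 0 ≤ c)
    {lam : Fin n → ℝ} (hnn : ∀ p, 1 ≤ p → p ≤ m → 0 ≤ sigmaV p lam) :
    ((n - l).choose (m - l) : ℝ) * c ^ (m - l) * sigmaV l lam
      ≤ sigmaV m (fun j => lam j + c) := by
  rw [sigmaV_add_const hmn]
  refine single_le_sum (f := fun l => ((n - l).choose (m - l) : ℝ) * c ^ (m - l) * sigmaV l lam)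
    (fun p hp => ?_) (mem_range.mpr (Nat.lt_succ_of_le hlm))
  have hσ : 0 ≤ sigmaV p lam := by
    rcases Nat.eq_zero_or_pos p with rfl | hp0
    · rw [sigmaV_zero]; exact zero_le_one
    · exact hnn p hp0 (Nat.lt_succ_iff.mp (mem_range.mp hp))
  positivity

lemma continuous_sigmaV (m : ℕ) : Continuous (sigmaV m : (Fin n → ℝ) → ℝ) := by
  unfold sigmaV
  fun_prop

lemma continuous_sigmaVd (m : ℕ) (i : Fin n) : Continuous (sigmaVd m i) :=
  (continuous_sigmaV m).comp (continuous_id.update i continuous_const)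

lemma sigmaVd_pos_of_forall_pos {m : ℕ} (hmn : m < n) (i : Fin n) {lam : Fin n → ℝ}
    (hpos : ∀ j, 0 < lam j) : 0 < sigmaVd m i lam := by
  rw [sigmaVd_eq_sum_erase]
  refine sum_pos (fun s _ => prod_pos fun j _ => hpos j) (powersetCard_nonempty.mpr ?_)
  rw [card_erase_of_mem (mem_univ i), card_univ, Fintype.card_fin]
  omega

end ElementarySymmetric

section GardingCone

variable {n : ℕ}

lemma GammaV.mono {k l : ℕ} {lam : Fin n → ℝ} (h : GammaV k lam) (hlk : l ≤ k) :
    GammaV l lam :=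
  fun p hp hpl => h p hp (hpl.trans hlk)

lemma gammaV_succ_iff {k : ℕ} {lam : Fin n → ℝ} :
    GammaV (k + 1) lam ↔ GammaV k lam ∧ 0 < sigmaV (k + 1) lam := by
  refine ⟨fun h => ⟨h.mono k.le_succ, h (k + 1) k.succ_pos le_rfl⟩, fun ⟨h, hk⟩ p hp hpk => ?_⟩
  rcases Nat.lt_or_eq_of_le hpk with hlt | rfl
  · exact h p hp (Nat.lt_succ_iff.mp hlt)
  · exact hk

lemma GammaV.add_const {k : ℕ} (hkn : k ≤ n) {lam : Fin n → ℝ} (h : GammaV k lam) {c : ℝ}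
    (hc : 0 ≤ c) : GammaV k (fun j => lam j + c) := fun p hp hpk => by
  have hle := term_le_sigmaV_add_const (hpk.trans hkn) le_rfl hc
    (fun q hq hqp => (h q hq (hqp.trans hpk)).le)
  simp only [Nat.sub_self, Nat.choose_zero_right, Nat.cast_one, pow_zero, one_mul] at hle
  exact (h p hp hpk).trans_le hle

lemma gammaV_add_const_of_nonneg {k : ℕ} (hkn : k ≤ n) {lam : Fin n → ℝ}
    (hnn : ∀ p, 1 ≤ p → p ≤ k → 0 ≤ sigmaV p lam) {c : ℝ} (hc : 0 < c) :
    GammaV k (fun j => lam j + c) := fun p hp hpk => by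
  have hle := term_le_sigmaV_add_const (hpk.trans hkn) (Nat.zero_le p) hc.le
    (fun q hq hqp => hnn q hq (hqp.trans hpk))
  rw [Nat.sub_zero, Nat.sub_zero, sigmaV_zero, mul_one] at hle
  have hchoose : (0 : ℝ) < n.choose p := by exact_mod_cast Nat.choose_pos (hpk.trans hkn)
  exact (by positivity : (0 : ℝ) < n.choose p * c ^ p).trans_le hle

lemma nonneg_of_forall_add_const_pos {f : (Fin n → ℝ) → ℝ} (hf : Continuous f)
    {w : Fin n → ℝ} (h : ∀ ε > 0, 0 < f (fun j => w j + ε)) : 0 ≤ f w := by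
  have hcont : Continuous fun ε : ℝ => f (fun j => w j + ε) := by fun_prop
  have htends := (hcont.tendsto 0).mono_left (nhdsWithin_le_nhds (s := Ioi 0))
  simp only [add_zero] at htends
  exact ge_of_tendsto htends (eventually_nhdsWithin_of_forall fun ε hε => (h ε hε).le)

lemma sigmaVd_pos_of_forall_add_const_ne_zero {m : ℕ} (hmn : m < n) (i : Fin n)
    (lam : Fin n → ℝ) (hne : ∀ s ≥ 0, sigmaVd m i (fun j => lam j + s) ≠ 0) :
    0 < sigmaVd m i lam := by
  set S := ∑ j, |lam j| + 1
  have hS : 0 ≤ S := by positivity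
  have hpos : 0 < sigmaVd m i (fun j => lam j + S) := by
    refine sigmaVd_pos_of_forall_pos hmn i fun j => ?_
    have := single_le_sum (fun j _ => abs_nonneg (lam j)) (mem_univ j)
    linarith [neg_abs_le (lam j)]
  have hcont : Continuous fun s : ℝ => sigmaVd m i (fun j => lam j + s) :=
    (continuous_sigmaVd m i).comp (by fun_prop)
  by_contra hle
  obtain ⟨s, hs, hzero⟩ := intermediate_value_Icc hS hcont.continuousOn
    ⟨by simpa using not_lt.mp hle, hpos.le⟩
  exact hne s hs.1 hzero

lemma sigmaVd_ne_zero_of_gammaV {m : ℕ} (hmn : m + 2 ≤ n)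
    (hind : ∀ lam : Fin n → ℝ, GammaV (m + 1) lam → ∀ i, GammaV m (Function.update lam i 0))
    {v : Fin n → ℝ} (hv : GammaV (m + 2) v) (i : Fin n) : sigmaVd (m + 1) i v ≠ 0 := by
  intro hzero
  set w := Function.update v i 0
  have hw : GammaV m w := hind v (hv.mono (by omega)) i
  have hw_top : 0 < sigmaV (m + 2) w := by
    have := sigmaV_succ (m + 1) i v
    rw [hzero, mul_zero, zero_add] at this
    exact (hv (m + 2) (by omega) le_rfl).trans_eq this
  have hw_nonneg : ∀ j, 0 ≤ sigmaVd m j w := by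
    intro j
    rcases Nat.eq_zero_or_pos m with rfl | hm
    · simp [sigmaVd, sigmaV_zero]
    refine nonneg_of_forall_add_const_pos (continuous_sigmaVd m j) fun ε hε => ?_
    refine hind _ (gammaV_add_const_of_nonneg (by omega) (fun p hp hpm => ?_) hε) j m hm le_rfl
    rcases Nat.lt_or_eq_of_le hpm with hlt | rfl
    · exact (hw p hp (Nat.lt_succ_iff.mp hlt)).le
    · exact hzero.ge
  have hsum := sum_sq_mul_sigmaVd m w
  rw [show sigmaV (m + 1) w = 0 from hzero, mul_zero, zero_sub] at hsum
  have : 0 ≤ ∑ j, w j ^ 2 * sigmaVd m j w :=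
    sum_nonneg fun j _ => mul_nonneg (sq_nonneg _) (hw_nonneg j)
  have : (0 : ℝ) < (m + 2) * sigmaV (m + 2) w := by positivity
  linarith

theorem GammaV.update_zero : ∀ {m : ℕ}, m + 1 ≤ n → ∀ {lam : Fin n → ℝ}, GammaV (m + 1) lam →
    ∀ i, GammaV m (Function.update lam i 0)
  | 0, _, _, _, _ => fun p hp hp0 => absurd (hp.trans hp0) (by norm_num)
  | m + 1, hmn, lam, h, i => by
    have hind : ∀ lam : Fin n → ℝ, GammaV (m + 1) lam → ∀ i, GammaV m (Function.update lam i 0) :=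
      fun lam h i => GammaV.update_zero (by omega) h i
    refine gammaV_succ_iff.mpr ⟨hind lam (h.mono (by omega)) i, ?_⟩
    exact sigmaVd_pos_of_forall_add_const_ne_zero (by omega) i lam fun s hs =>
      sigmaVd_ne_zero_of_gammaV hmn hind (h.add_const hmn hs) i

theorem GammaV.sigmaVd_pos {k : ℕ} (hkn : k + 1 ≤ n) {lam : Fin n → ℝ} (h : GammaV (k + 1) lam)
    (i : Fin n) : 0 < sigmaVd k i lam := by
  rcases Nat.eq_zero_or_pos k with rfl | hk
  · simp [sigmaVd, sigmaV_zero]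
  · exact h.update_zero hkn i k hk le_rfl

end GardingCone

section MaximalEntry

variable {n : ℕ}

lemma succ_mul_sigmaV_succ_le {m : ℕ} (hmn : m + 1 ≤ n) {w : Fin n → ℝ} (hw : GammaV (m + 1) w)
    {i : Fin n} (hwi : w i = 0) {a : ℝ} (hle : ∀ j, w j ≤ a) :
    (m + 1) * sigmaV (m + 1) w ≤ a * (n - m - 1) * sigmaV m w := by
  have hsingle := single_le_sum (f := fun j => (a - w j) * sigmaVd m j w)
    (fun j _ => mul_nonneg (sub_nonneg.mpr (hle j)) (hw.sigmaVd_pos hmn j).le) (mem_univ i)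
  have hii : sigmaVd m i w = sigmaV m w := by
    rw [sigmaVd, ← hwi, Function.update_eq_self]
  have hsum : ∑ j, (a - w j) * sigmaVd m j w
      = a * (n - m) * sigmaV m w - (m + 1) * sigmaV (m + 1) w := by
    rw [sum_congr rfl fun j _ => sub_mul a (w j) _, sum_sub_distrib, ← mul_sum, sum_sigmaVd,
      sum_mul_sigmaVd]
    ring
  rw [hsum, hwi, sub_zero, hii] at hsingle
  linarith

theorem div_mul_sigmaV_le_mul_sigmaVd {m : ℕ} (hmn : m + 1 ≤ n) {lam : Fin n → ℝ}
    (h : GammaV (m + 1) lam) {i : Fin n} (hmax : ∀ j, lam j ≤ lam i) :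
    (m + 1) / n * sigmaV (m + 1) lam ≤ lam i * sigmaVd m i lam := by
  set w := Function.update lam i 0
  have hn : (0 : ℝ) < n := by exact_mod_cast (by omega : 0 < n)
  have hmn' : (m : ℝ) + 1 ≤ n := by exact_mod_cast hmn
  have hσ : 0 < sigmaV (m + 1) lam := h (m + 1) m.succ_pos le_rfl
  have hsplit : sigmaV (m + 1) lam = lam i * sigmaV m w + sigmaV (m + 1) w :=
    sigmaV_succ m i lam
  rw [div_mul_eq_mul_div, div_le_iff₀ hn]
  change _ ≤ lam i * sigmaV m w * n
  rcases le_or_gt (sigmaV (m + 1) w) 0 with hw | hw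
  · calc (m + 1) * sigmaV (m + 1) lam ≤ n * sigmaV (m + 1) lam := by gcongr
      _ ≤ n * (lam i * sigmaV m w) := by gcongr; linarith
      _ = lam i * sigmaV m w * n := by ring
  have ha : 0 ≤ lam i := by
    have h1 := h 1 le_rfl (by omega)
    rw [sigmaV_one] at h1
    by_contra! hneg
    exact h1.not_ge (sum_nonpos fun j _ => (hmax j).trans hneg.le)
  have hwmax : ∀ j, w j ≤ lam i := fun j => by
    rcases eq_or_ne j i with rfl | hj
    · simpa [w] using ha
    · simpa [w, hj] using hmax j
  have hbound := succ_mul_sigmaV_succ_le hmn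
    (gammaV_succ_iff.mpr ⟨h.update_zero hmn i, hw⟩) (Function.update_self i 0 lam) hwmax
  rw [hsplit]
  linarith

end MaximalEntry

/-- For λ ∈ Γ_k with λ_1 ≥ ⋯ ≥ λ_n, λ_1 σ_{k−1}(λ|1) ≥ (k/n) σ_k(λ). -/
theorem statement_15 (n k : ℕ) (hk : 1 ≤ k) (hkn : k ≤ n)
    (lam : Fin n → ℝ) (hΓ : GammaV k lam)
    (hsort : ∀ i j : Fin n, i ≤ j → lam j ≤ lam i) :
    (k : ℝ) / (n : ℝ) * sigmaV k lam ≤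
      lam (⟨0, by omega⟩ : Fin n) * sigmaVd (k-1) (⟨0, by omega⟩ : Fin n) lam := by
  obtain ⟨m, rfl⟩ : ∃ m, k = m + 1 := ⟨k - 1, by omega⟩
  have := div_mul_sigmaV_le_mul_sigmaVd hkn hΓ fun j => hsort ⟨0, by omega⟩ j (Nat.zero_le _)
  simpa using this
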